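/- Let k ≥ 2 be an integer and let T be a tree on n ≥ 8 vertices with diameter n − t, where n/3 ≤ t ≤ n − 5. Then (n+2)/3 ≤ α_{k-reg}(T) ≤ max{n − f(n,t) − 1, t + 1}, where f(n,t) = ⌈2(t−1)/(n−t)⌉ + 2 if n − t is even, and f(n,t) = ⌈2(t−1)/(n−t−1)⌉ + 2 if n − t is odd. -/

import Mathlib

open SimpleGraph

/-- The degree of a vertex `v` in `G`: the number of neighbors of `v`. -/
noncomputable def degN {V : Type*} (G : SimpleGraph V) (v : V) : ℕ := {u | G.Adj v u}.ncard

/-- A set of vertices is `k`-independent if the induced subgraph has maximum degree at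
most `k`, i.e. every vertex of the set has at most `k` neighbors inside the set. -/
def IsKIndepSet {V : Type*} (G : SimpleGraph V) (k : ℕ) (S : Set V) : Prop :=
  ∀ v ∈ S, {u | u ∈ S ∧ G.Adj v u}.ncard ≤ k

/-- A set of vertices is regular if all its vertices have the same degree in `G`. -/
def IsRegularSet {V : Type*} (G : SimpleGraph V) (S : Set V) : Prop :=
  ∀ u ∈ S, ∀ v ∈ S, degN G u = degN G v

/-- The regular `k`-independence number `α_{k-reg}(G)`: the maximum cardinality of a set
of vertices that is both `k`-independent and regular. -/
noncomputable def regKIndepNum {V : Type*} (G : SimpleGraph V) (k : ℕ) : ℕ :=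
  sSup {m : ℕ | ∃ S : Set V, S.ncard = m ∧ IsKIndepSet G k S ∧ IsRegularSet G S}

/-- `f(n,t) = ⌈2(t-1)/(n-t)⌉ + 2` if `n - t` is even, and
`f(n,t) = ⌈2(t-1)/(n-t-1)⌉ + 2` if `n - t` is odd. -/
def fnt (n t : ℕ) : ℕ :=
  if (n - t) % 2 = 0 then (2 * (t - 1) + (n - t) - 1) / (n - t) + 2
  else (2 * (t - 1) + (n - t - 1) - 1) / (n - t - 1) + 2

/-!
Let `x, y` realise the diameter `D = n - t`. In a tree, `v` lies on the `x`–`y` path iff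
`d(x, v) + d(v, y) = D`. Leaves meet this path only in its ends, so there are at most
`n - D + 1 = t + 1` leaves. A vertex `v` off the path lies on the path from `x` to a leaf
`u ∉ {x, y}` chosen as far from `x` as possible; `v` then also lies on the `y`–`u` path, and by
parity `d(x, v) + d(v, y) ≥ D + 2`, so `d(v, u) < ⌊D/2⌋`. Hence `v ↦ (u, d(v, u))` is injective,
`t - 1 ≤ (ℓ - 2) ⌊D/2⌋` for the number `ℓ` of leaves, and `ℓ ≥ f(n, t)`.

A regular set lies in a single degree class. Writing `n₁, n₂, n₃` for the numbers of vertices of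
degree `1`, `2`, `≥ 3`, the degree sum gives `n₃ + 2 ≤ n₁`, with `n₃ > 0` once `n₁ ≥ 3`. So the
classes have sizes `n₁ ≤ t + 1`, `n₂ ≤ n - f(n, t) - 1` and `n₃ ≤ t - 1`, while the classes of
degree `1` and `2` are `k`-independent and `n ≤ 2 n₁ + n₂ - 2`.
-/

open Finset

namespace SimpleGraph

variable {V : Type*} {G : SimpleGraph V}

def IsBetween (G : SimpleGraph V) (a v b : V) : Prop :=
  G.dist a v + G.dist v b = G.dist a b

lemma IsBetween.symm {a v b : V} (h : G.IsBetween a v b) : G.IsBetween b v a := by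
  unfold IsBetween at *
  rw [dist_comm, add_comm, dist_comm, h, dist_comm]

noncomputable instance (a v b : V) : Decidable (G.IsBetween a v b) :=
  inferInstanceAs (Decidable (_ = _))

lemma isBetween_left (a b : V) : G.IsBetween a a b := by
  simp [IsBetween]

lemma isBetween_right (a b : V) : G.IsBetween a b b := by
  simp [IsBetween]

lemma Connected.isBetween_trans (hG : G.Connected) {a v u z : V} (hv : G.IsBetween a v u)
    (hu : G.IsBetween a u z) : G.IsBetween a v z := by
  unfold IsBetween at *
  have := hG.dist_triangle (u := a) (v := v) (w := z)
  have := hG.dist_triangle (u := v) (v := u) (w := z)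
  omega

lemma Connected.isBetween_of_mem_support (hG : G.Connected) {a b z : V} (p : G.Walk a b)
    (hp : p.length = G.dist a b) (hz : z ∈ p.support) : G.IsBetween a z b := by
  classical
  have hsplit := congrArg Walk.length (p.take_spec hz)
  rw [Walk.length_append] at hsplit
  have := dist_le (p.takeUntil z hz)
  have := dist_le (p.dropUntil z hz)
  have := hG.dist_triangle (u := a) (v := z) (w := b)
  unfold IsBetween
  omega

lemma IsTree.mem_support_of_isBetween (hT : G.IsTree) {a b z : V} (h : G.IsBetween a z b)
    (p : G.Walk a b) : z ∈ p.support := by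
  classical
  obtain ⟨q₁, hq₁⟩ := hT.connected.exists_walk_length_eq_dist a z
  obtain ⟨q₂, hq₂⟩ := hT.connected.exists_walk_length_eq_dist z b
  have hq : (q₁.append q₂).IsPath :=
    Walk.isPath_of_length_eq_dist _ (by rw [Walk.length_append, hq₁, hq₂]; exact h)
  have heq : q₁.append q₂ = p.bypass :=
    congrArg Subtype.val ((hT.isAcyclic.subsingleton_path a b).elim ⟨_, hq⟩ ⟨_, p.bypass_isPath⟩)
  apply p.support_bypass_subset_support
  rw [← heq, Walk.mem_support_append_iff]
  exact Or.inr q₂.start_mem_support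

lemma IsTree.isBetween_or_isBetween (hT : G.IsTree) {a b z : V} (h : G.IsBetween a z b) (c : V) :
    G.IsBetween a z c ∨ G.IsBetween c z b := by
  obtain ⟨p₁, hp₁⟩ := hT.connected.exists_walk_length_eq_dist a c
  obtain ⟨p₂, hp₂⟩ := hT.connected.exists_walk_length_eq_dist c b
  have hz := hT.mem_support_of_isBetween h (p₁.append p₂)
  rw [Walk.mem_support_append_iff] at hz
  exact hz.imp (hT.connected.isBetween_of_mem_support p₁ hp₁)
    (hT.connected.isBetween_of_mem_support p₂ hp₂)

lemma IsTree.eq_of_isBetween (hT : G.IsTree) {a b z z' : V} (hz : G.IsBetween a z b)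
    (hz' : G.IsBetween a z' b) (hd : G.dist a z = G.dist a z') : z = z' := by
  apply hT.connected.dist_eq_zero_iff.mp
  rcases hT.isBetween_or_isBetween hz z' with h | h <;> unfold IsBetween at *
  · omega
  · rw [dist_comm]; omega

lemma IsTree.even_dist_add_length (hT : G.IsTree) (a : V) {u v : V} (p : G.Walk u v) :
    Even (G.dist a u + p.length + G.dist a v) := by
  induction p with
  | nil => simp
  | cons hadj p ih =>
    rw [Walk.length_cons, Nat.even_iff] at *
    rcases hT.dist_eq_dist_add_one_of_adj a hadj with h | h <;> omega

lemma Connected.exists_adj_dist_add_one_eq (hG : G.Connected) {v a : V} (hva : v ≠ a) :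
    ∃ z, G.Adj v z ∧ G.dist z a + 1 = G.dist v a := by
  obtain ⟨p, hp⟩ := hG.exists_walk_length_eq_dist v a
  cases p with
  | nil => exact absurd rfl hva
  | cons hadj q =>
    refine ⟨_, hadj, le_antisymm ?_ ?_⟩
    · rw [← hp, Walk.length_cons]
      exact Nat.add_le_add_right (dist_le q) 1
    · rw [← dist_eq_one_iff_adj.mpr hadj, add_comm]
      exact hG.dist_triangle

lemma Connected.two_le_degree_of_isBetween (hG : G.Connected) {a v b : V}
    [Fintype (G.neighborSet v)] (h : G.IsBetween a v b) (hva : v ≠ a) (hvb : v ≠ b) :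
    2 ≤ G.degree v := by
  classical
  obtain ⟨z, hz, hza⟩ := hG.exists_adj_dist_add_one_eq hva
  obtain ⟨z', hz', hzb⟩ := hG.exists_adj_dist_add_one_eq hvb
  have hne : z ≠ z' := by
    rintro rfl
    have := hG.dist_triangle (u := a) (v := z) (w := b)
    have := G.dist_comm (u := a) (v := z)
    have := G.dist_comm (u := a) (v := v)
    unfold IsBetween at h
    omega
  rw [← card_neighborFinset_eq_degree, ← card_pair hne]
  exact card_le_card (by simp [insert_subset_iff, hz, hz'])

lemma IsTree.degree_le_one_of_forall_adj_dist_lt (hT : G.IsTree) {a u : V}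
    [Fintype (G.neighborSet u)] (h : ∀ z, G.Adj u z → G.dist a z < G.dist a u) :
    G.degree u ≤ 1 := by
  rw [← card_neighborFinset_eq_degree, card_le_one]
  intro z hz z' hz'
  rw [mem_neighborFinset] at hz hz'
  have hbetween : ∀ w, G.Adj u w → G.IsBetween u w a ∧ G.dist u w = 1 := by
    intro w hw
    have := h w hw
    have := hT.dist_eq_dist_add_one_of_adj a hw
    refine ⟨?_, dist_eq_one_iff_adj.mpr hw⟩
    unfold IsBetween
    rw [dist_eq_one_iff_adj.mpr hw, dist_comm (u := w), dist_comm (u := u)]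
    omega
  exact hT.eq_of_isBetween (hbetween z hz).1 (hbetween z' hz').1
    ((hbetween z hz).2.trans (hbetween z' hz').2.symm)

lemma IsTree.dist_add_two_le_of_not_isBetween (hT : G.IsTree) {a v b : V}
    (h : ¬ G.IsBetween a v b) : G.dist a b + 2 ≤ G.dist a v + G.dist v b := by
  obtain ⟨p, hp⟩ := hT.connected.exists_walk_length_eq_dist a v
  have hpar := Nat.even_iff.mp (hT.even_dist_add_length b p)
  have := hT.connected.dist_triangle (u := a) (v := v) (w := b)
  unfold IsBetween at h
  rw [dist_comm (u := b), dist_comm (u := b) (v := v)] at hpar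
  omega

section Finite

variable [Fintype V]

lemma Connected.dist_add_one_le_card_isBetween (hG : G.Connected) (a b : V) :
    G.dist a b + 1 ≤ #{v | G.IsBetween a v b} := by
  classical
  obtain ⟨p, hp, hlen⟩ := hG.exists_path_of_dist a b
  calc G.dist a b + 1 = p.support.toFinset.card := by
        rw [List.toFinset_card_of_nodup hp.support_nodup, Walk.length_support, hlen]
    _ ≤ #{v | G.IsBetween a v b} := card_le_card fun v hv => by
        simpa using hG.isBetween_of_mem_support p hlen (List.mem_toFinset.mp hv)

lemma IsTree.card_isBetween_le (hT : G.IsTree) (a b : V) :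
    #{v | G.IsBetween a v b} ≤ G.dist a b + 1 := by
  calc #{v | G.IsBetween a v b} ≤ #(range (G.dist a b + 1)) := by
        refine card_le_card_of_injOn (G.dist a) (fun v hv => ?_) (fun v hv w hw hvw => ?_)
        · simp only [coe_filter, mem_univ, true_and, Set.mem_ofPred_eq] at hv
          unfold IsBetween at hv
          simp only [coe_range, Set.mem_Iio]
          omega
        · simp only [coe_filter, mem_univ, true_and, Set.mem_ofPred_eq] at hv hw
          exact hT.eq_of_isBetween hv hw hvw
    _ = G.dist a b + 1 := card_range _

variable [DecidableRel G.Adj]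

lemma Connected.card_degree_eq_one_add_dist_le (hG : G.Connected) (a b : V) :
    #{v | G.degree v = 1} + G.dist a b ≤ Fintype.card V + 1 := by
  classical
  have hleaves : ({v | G.degree v = 1} : Finset V) ⊆
      ({v | ¬ G.IsBetween a v b} : Finset V) ∪ {a, b} := by
    intro v hv
    by_contra hcon
    simp only [mem_filter, mem_univ, true_and, mem_union, mem_insert, mem_singleton,
      not_or] at hv hcon
    have := hG.two_le_degree_of_isBetween (not_not.mp hcon.1) hcon.2.1 hcon.2.2
    omega
  have := (card_le_card hleaves).trans (card_union_le _ _)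
  have := card_filter_add_card_filter_not (s := univ) (fun v => G.IsBetween a v b)
  have := hG.dist_add_one_le_card_isBetween a b
  have := card_insert_le a {b}
  simp only [card_univ, card_singleton] at *
  omega

lemma IsTree.exists_far_leaf (hT : G.IsTree) {x y v : V}
    (hdiam : ∀ a b, G.dist a b ≤ G.dist x y) (hv : ¬ G.IsBetween x v y) :
    ∃ u, G.degree u ≤ 1 ∧ u ≠ x ∧ u ≠ y ∧ G.IsBetween x v u ∧
      2 * G.dist v u + 2 ≤ G.dist x y := by
  obtain ⟨u, hu, humax⟩ := exists_max_image ({u | G.IsBetween x v u} : Finset V) (G.dist x)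
    ⟨v, by simpa using isBetween_right x v⟩
  simp only [mem_filter, mem_univ, true_and] at hu humax
  refine ⟨u, hT.degree_le_one_of_forall_adj_dist_lt (a := x) fun z hz => ?_, ?_, ?_, hu, ?_⟩
  · by_contra! hle
    have hzu : G.IsBetween x u z := by
      have := hT.dist_eq_dist_add_one_of_adj x hz
      unfold IsBetween
      rw [dist_eq_one_iff_adj.mpr hz]
      omega
    have := humax z (hT.connected.isBetween_trans hu hzu)
    have := hT.dist_ne_of_adj x hz
    omega
  · intro hux
    rw [hux] at hu
    have hvx : v = x := by
      unfold IsBetween at hu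
      rw [dist_self] at hu
      exact (hT.connected.dist_eq_zero_iff.mp (by omega)).symm
    exact hv (hvx ▸ isBetween_left (G := G) x y)
  · intro huy
    exact hv (huy ▸ hu)
  · have hyv := (hT.isBetween_or_isBetween hu y).resolve_left hv
    have := hT.dist_add_two_le_of_not_isBetween hv
    have := hdiam x u
    have := hdiam y u
    have := G.dist_comm (u := y) (v := v)
    unfold IsBetween at hu hyv
    omega

lemma IsTree.degree_eq_one_of_dist_le (hT : G.IsTree) {x y : V}
    (hdiam : ∀ z, G.dist y z ≤ G.dist y x) (hxy : x ≠ y) : G.degree x = 1 := by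
  have hpos := (hT.connected x y).degree_pos_left hxy
  have := hT.degree_le_one_of_forall_adj_dist_lt (a := y) fun z hz =>
    lt_of_le_of_ne (hdiam z) (hT.dist_ne_of_adj y hz).symm
  omega

lemma IsTree.card_le_dist_add_mul (hT : G.IsTree) {x y : V}
    (hdiam : ∀ a b, G.dist a b ≤ G.dist x y) (hxy : x ≠ y) :
    Fintype.card V ≤ G.dist x y + 1 + (#{v | G.degree v = 1} - 2) * (G.dist x y / 2) := by
  classical
  have hx : G.degree x = 1 :=
    hT.degree_eq_one_of_dist_le (fun z => (hdiam y z).trans_eq dist_comm) hxy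
  have hy : G.degree y = 1 := hT.degree_eq_one_of_dist_le (hdiam x) hxy.symm
  choose! u hu using fun v (hv : ¬ G.IsBetween x v y) => hT.exists_far_leaf hdiam hv
  set L : Finset V := {v | G.degree v = 1}
  set P' : Finset V := {v | ¬ G.IsBetween x v y}
  have hmaps : Set.MapsTo (fun v => (u v, G.dist v (u v))) P'
      (((L \ {x, y}) ×ˢ range (G.dist x y / 2) : Finset (V × ℕ))) := by
    intro v hv
    simp only [coe_filter, mem_univ, true_and, Set.mem_ofPred_eq, P'] at hv
    obtain ⟨hdeg, hux, huy, -, hlen⟩ := hu v hv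
    have hpos := (hT.connected (u v) x).degree_pos_left hux
    simp only [coe_product, coe_sdiff, coe_filter, mem_univ, true_and, coe_insert, coe_singleton,
      coe_range, Set.mem_prod, Set.mem_sdiff, Set.mem_ofPred_eq, Set.mem_insert_iff,
      Set.mem_singleton_iff, not_or, Set.mem_Iio, L]
    exact ⟨⟨by omega, hux, huy⟩, by omega⟩
  have hinj : Set.InjOn (fun v => (u v, G.dist v (u v))) P' := by
    intro v hv w hw hvw
    simp only [coe_filter, mem_univ, true_and, Set.mem_ofPred_eq, Prod.mk.injEq, P'] at hv hw hvw
    obtain ⟨hu_eq, hd_eq⟩ := hvw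
    have hbv := (hu v hv).2.2.2.1.symm
    have hbw := (hu w hw).2.2.2.1.symm
    rw [hu_eq] at hbv hd_eq
    exact hT.eq_of_isBetween hbv hbw (by rw [dist_comm, hd_eq, dist_comm])
  have hoff := card_le_card_of_injOn _ hmaps hinj
  have hsplit : #{v | G.IsBetween x v y} + #P' = Fintype.card V :=
    card_filter_add_card_filter_not _
  have hon := hT.card_isBetween_le x y
  have hpair : {x, y} ⊆ L := by
    simp [L, insert_subset_iff, hx, hy]
  rw [card_product, card_range, card_sdiff_of_subset hpair, card_pair hxy] at hoff
  omega

lemma card_degree_eq_one_add_card_degree_eq_two_add_card_three_le_degree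
    (hpos : ∀ v, 0 < G.degree v) :
    #{v | G.degree v = 1} + #{v | G.degree v = 2} + #{v | 3 ≤ G.degree v} = Fintype.card V := by
  rw [Finset.card_filter, Finset.card_filter, Finset.card_filter, ← sum_add_distrib,
    ← sum_add_distrib, Fintype.card_eq_sum_ones]
  refine sum_congr rfl fun v _ => ?_
  have := hpos v
  split_ifs <;> omega

lemma IsTree.card_degree_eq_one_eq (hT : G.IsTree) (hpos : ∀ v, 0 < G.degree v) :
    #{v | G.degree v = 1} = 2 + ∑ v with 3 ≤ G.degree v, (G.degree v - 2) := by
  classical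
  have hsum : ∑ v, G.degree v + 2 = 2 * Fintype.card V := by
    rw [sum_degrees_eq_twice_card_edges, ← hT.card_edgeFinset]
    ring
  have hpointwise : ∀ v, G.degree v + (if G.degree v = 1 then 1 else 0) =
      2 + (if 3 ≤ G.degree v then G.degree v - 2 else 0) := fun v => by
    have := hpos v
    split_ifs <;> omega
  have := sum_congr rfl fun v (_ : v ∈ univ) => hpointwise v
  rw [sum_add_distrib, sum_add_distrib, ← Finset.card_filter, ← sum_filter, sum_const, card_univ,
    smul_eq_mul] at this
  omega

lemma IsTree.card_three_le_degree_add_two_le (hT : G.IsTree) (hpos : ∀ v, 0 < G.degree v) :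
    #{v | 3 ≤ G.degree v} + 2 ≤ #{v | G.degree v = 1} := by
  rw [hT.card_degree_eq_one_eq hpos, add_comm, card_eq_sum_ones]
  gcongr with v hv
  simp only [mem_filter, mem_univ, true_and] at hv
  omega

lemma IsTree.card_three_le_degree_pos (hT : G.IsTree) (hpos : ∀ v, 0 < G.degree v)
    (h : 3 ≤ #{v | G.degree v = 1}) : 0 < #{v | 3 ≤ G.degree v} := by
  rw [hT.card_degree_eq_one_eq hpos] at h
  refine card_pos.mpr (nonempty_iff_ne_empty.mpr fun hempty => ?_)
  rw [hempty, sum_empty] at h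
  omega

end Finite

end SimpleGraph

section

variable {V : Type*} {G : SimpleGraph V} [Fintype V] [DecidableRel G.Adj]

lemma degN_eq_degree (v : V) : degN G v = G.degree v := by
  rw [degN, ← card_neighborFinset_eq_degree, neighborFinset_def, ← Set.ncard_eq_toFinset_card']
  rfl

lemma isRegularSet_degree_eq (j : ℕ) : IsRegularSet G ↑({v | G.degree v = j} : Finset V) := by
  intro u hu v hv
  simp only [coe_filter, mem_univ, true_and, Set.mem_ofPred_eq] at hu hv
  rw [degN_eq_degree, degN_eq_degree, hu, hv]

lemma isKIndepSet_of_degree_le {k : ℕ} {S : Set V} (h : ∀ v ∈ S, G.degree v ≤ k) :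
    IsKIndepSet G k S := fun v hv =>
  calc {u | u ∈ S ∧ G.Adj v u}.ncard ≤ {u | G.Adj v u}.ncard :=
        Set.ncard_le_ncard (fun _ hu => hu.2) (Set.toFinite _)
    _ = G.degree v := degN_eq_degree v
    _ ≤ k := h v hv

lemma card_degree_eq_le_regKIndepNum {j k : ℕ} (hj : j ≤ k) :
    #{v | G.degree v = j} ≤ regKIndepNum G k := by
  refine le_csSup ⟨Fintype.card V, ?_⟩ ⟨_, Set.ncard_coe_finset _,
    isKIndepSet_of_degree_le fun v hv => ?_, isRegularSet_degree_eq j⟩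
  · rintro m ⟨S, rfl, -, -⟩
    exact (Set.ncard_le_card S).trans_eq Nat.card_eq_fintype_card
  · simp only [coe_filter, mem_univ, true_and, Set.mem_ofPred_eq] at hv
    omega

lemma regKIndepNum_le_max (hpos : ∀ v, 0 < G.degree v) (k : ℕ) :
    regKIndepNum G k ≤
      max #{v | G.degree v = 1} (max #{v | G.degree v = 2} #{v | 3 ≤ G.degree v}) := by
  refine csSup_le ⟨0, ∅, Set.ncard_empty V, fun v hv => hv.elim, fun u hu => hu.elim⟩ ?_
  rintro m ⟨S, rfl, -, hS⟩
  obtain rfl | ⟨w, hw⟩ := S.eq_empty_or_nonempty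
  · simp
  have hsub : S ⊆ ↑({v | G.degree v = G.degree w} : Finset V) := fun v hv => by
    simpa [← degN_eq_degree] using hS v hv w hw
  refine (Set.ncard_le_ncard hsub).trans ?_
  rw [Set.ncard_coe_finset]
  have := hpos w
  rcases (by omega : G.degree w = 1 ∨ G.degree w = 2 ∨ 3 ≤ G.degree w) with h | h | h
  · rw [h]; omega
  · rw [h]; omega
  · have := card_le_card (s := {v | G.degree v = G.degree w}) (t := {v | 3 ≤ G.degree v})
      fun v hv => by simp only [mem_filter, mem_univ, true_and] at hv ⊢; omega
    omega

end

/-- `2 * ((n - t) / 2)` is the largest even number not exceeding the diameter `n - t`. -/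
lemma fnt_eq_ceilDiv (n t : ℕ) : fnt n t = (2 * (t - 1)) ⌈/⌉ (2 * ((n - t) / 2)) + 2 := by
  unfold fnt
  split_ifs with h
  · rw [show 2 * ((n - t) / 2) = n - t by omega]; rfl
  · rw [show 2 * ((n - t) / 2) = n - t - 1 by omega]; rfl

lemma three_le_fnt {n t : ℕ} (ht : 2 ≤ t) (hd : 2 ≤ n - t) : 3 ≤ fnt n t := by
  have : ¬ (2 * (t - 1)) ⌈/⌉ (2 * ((n - t) / 2)) ≤ 0 := by
    rw [ceilDiv_le_iff_le_mul (by omega)]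
    omega
  rw [fnt_eq_ceilDiv]
  omega

lemma fnt_le_of_le_mul {n t ℓ : ℕ} (hd : 2 ≤ n - t) (hℓ : 2 ≤ ℓ)
    (h : t - 1 ≤ (ℓ - 2) * ((n - t) / 2)) :
    fnt n t ≤ ℓ := by
  have : (2 * (t - 1)) ⌈/⌉ (2 * ((n - t) / 2)) ≤ ℓ - 2 := by
    rw [ceilDiv_le_iff_le_mul (by omega), mul_assoc, mul_comm _ (ℓ - 2)]
    omega
  rw [fnt_eq_ceilDiv]
  omega

/-- For `k ≥ 2` and a tree `T` on `n ≥ 8` vertices with diameter `n - t`, where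
`n/3 ≤ t ≤ n - 5`, we have `(n+2)/3 ≤ α_{k-reg}(T) ≤ max {n - f(n,t) - 1, t + 1}`. -/
theorem stmt_11 {V : Type*} [Fintype V] (T : SimpleGraph V) (hT : T.IsTree)
    (n t k : ℕ) (hk : 2 ≤ k) (hn : Fintype.card V = n) (hn8 : 8 ≤ n)
    (ht2 : n ≤ 3 * t) (ht3 : t ≤ n - 5) (hdiam : T.diam = n - t) :
    n + 2 ≤ 3 * regKIndepNum T k ∧
    regKIndepNum T k ≤ max (n - fnt n t - 1) (t + 1) := by
  classical
  have : Nonempty V := hT.connected.nonempty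
  obtain ⟨x, y, hxy⟩ := T.exists_dist_eq_diam
  have hfar : ∀ a b, T.dist a b ≤ T.dist x y := fun a b =>
    hxy ▸ dist_le_diam (ediam_ne_top_of_diam_ne_zero (by omega))
  rw [hdiam] at hxy
  have hx_ne_y : x ≠ y := by rintro rfl; rw [dist_self] at hxy; omega
  have : Nontrivial V := ⟨⟨x, y, hx_ne_y⟩⟩
  have hpos : ∀ v, 0 < T.degree v := fun v => hT.connected.preconnected.degree_pos_of_nontrivial v
  have hleaves := hT.connected.card_degree_eq_one_add_dist_le x y
  have hspread := hT.card_le_dist_add_mul hfar hx_ne_y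
  have hpart := card_degree_eq_one_add_card_degree_eq_two_add_card_three_le_degree hpos
  have hbranch := hT.card_three_le_degree_add_two_le hpos
  rw [hxy, hn] at *
  have hfA : fnt n t ≤ #{v | T.degree v = 1} := fnt_le_of_le_mul (by omega) (by omega) (by omega)
  have hC := hT.card_three_le_degree_pos hpos ((three_le_fnt (by omega) (by omega)).trans hfA)
  have hA := card_degree_eq_le_regKIndepNum (G := T) (k := k) (j := 1) (by omega)
  have hB := card_degree_eq_le_regKIndepNum (G := T) (k := k) (j := 2) hk
  exact ⟨by omega, (regKIndepNum_le_max hpos k).trans (by omega)⟩
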